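/- For any A ∈ M_j, the unique solution y = (y_1,...,y_j) of A yᵀ = 1ᵀ (where 1 = (1,...,1)) satisfies y_i > 0 for every i, and moreover s · Σ_{i=1}^j y_i < 1, where s = min_{i≠l} a_{i,l} (for j = 1 one has y_1 = 1). -/

import Mathlib

/-- Membership in the class `M_j` of ultrametric matrices from the paper. -/
def MemUltra (η : ℝ) {ι : Type*} [Fintype ι] [DecidableEq ι] (A : Matrix ι ι ℝ) : Prop :=
  A.IsSymm ∧ (∀ i, A i i = 1) ∧
  (∀ i l, i ≠ l → 0 ≤ A i l ∧ A i l ≤ 1 - η) ∧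
  (∀ i l p, i ≠ l → l ≠ p → i ≠ p → min (A l p) (A i p) ≤ A i l)

/-!
Let `s = A p q` be the smallest off-diagonal entry of a strictly ultrametric matrix `A`. By the
ultrametric inequality, `i ~ l :⇔ s < A i l` is an equivalence relation, `p` and `q` lie in
different classes, and `A a l = s` whenever `a` and `l` lie in different classes. So if
`A y = c 𝟙`, then on every class `S` the smaller strictly ultrametric matrix `(A - s)|_S`
maps `y|_S` to `(c - s ∑ y) 𝟙`. By induction on the size, every `y i` has the sign of
`c - s ∑ y`; as `s ≥ 0`, this common sign is the sign of `c`.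
-/

open Finset SignType

theorem sign_sub_mul_sum_eq_sign {ι : Type*} [Fintype ι] [Nonempty ι] {y : ι → ℝ} {c s : ℝ}
    (hs : 0 ≤ s) (hy : ∀ i, sign (y i) = sign (c - s * ∑ i, y i)) :
    sign (c - s * ∑ i, y i) = sign c := by
  have hsum := sign_sum univ_nonempty _ fun i _ => hy i
  rcases lt_trichotomy (c - s * ∑ i, y i) 0 with hd | hd | hd
  · rw [sign_neg hd] at hsum ⊢
    have := mul_nonpos_of_nonneg_of_nonpos hs (sign_eq_neg_one_iff.1 hsum).le
    rw [sign_neg (by linarith)]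
  · rw [hd, sign_zero] at hsum ⊢
    rw [sign_eq_zero_iff.1 hsum, mul_zero, sub_zero] at hd
    rw [hd, sign_zero]
  · rw [sign_pos hd] at hsum ⊢
    have := mul_nonneg hs (sign_eq_one_iff.1 hsum).le
    rw [sign_pos (by linarith)]

namespace Matrix

variable {ι κ : Type*}

theorem exists_offDiag_min [Finite ι] [Nontrivial ι] (A : Matrix ι ι ℝ) :
    ∃ p q, p ≠ q ∧ ∀ i j, i ≠ j → A p q ≤ A i j := by
  obtain ⟨p, q, hpq⟩ := exists_pair_ne ι
  have : Nonempty {x : ι × ι // x.1 ≠ x.2} := ⟨⟨(p, q), hpq⟩⟩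
  obtain ⟨⟨⟨p, q⟩, hpq⟩, hmin⟩ :=
    Finite.exists_min fun x : {x : ι × ι // x.1 ≠ x.2} => A x.1.1 x.1.2
  exact ⟨p, q, hpq, fun i j hij => hmin ⟨(i, j), hij⟩⟩

theorem mul_sum_lt_mulVec_apply [Fintype ι] {A : Matrix ι ι ℝ} {y : ι → ℝ}
    (hy : ∀ l, 0 < y l) {s : ℝ} {p : ι} (hs : ∀ l, p ≠ l → s ≤ A p l) (hp : s < A p p) :
    s * ∑ l, y l < (A *ᵥ y) p := by
  rw [mul_sum]
  refine sum_lt_sum (fun l _ => ?_) ⟨p, mem_univ p, mul_lt_mul_of_pos_right hp (hy p)⟩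
  rcases eq_or_ne p l with rfl | hpl
  · exact mul_le_mul_of_nonneg_right hp.le (hy p).le
  · exact mul_le_mul_of_nonneg_right (hs l hpl) (hy l).le

/-- Strictly ultrametric matrices in the sense of Martínez, Michon and San Martín. -/
structure IsStrictlyUltrametric (A : Matrix ι ι ℝ) : Prop where
  isSymm : A.IsSymm
  nonneg : ∀ i j, 0 ≤ A i j
  min_le : ∀ i j k, min (A i k) (A k j) ≤ A i j
  lt_diag : ∀ i j, i ≠ j → A i j < A i i
  diag_pos : ∀ i, 0 < A i i

namespace IsStrictlyUltrametric

variable {A : Matrix ι ι ℝ}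

theorem of_memUltra [Fintype ι] [DecidableEq ι] {η : ℝ} (hη : 0 < η) (hA : MemUltra η A) :
    A.IsStrictlyUltrametric := by
  obtain ⟨hsymm, hdiag, hbd, hultra⟩ := hA
  have lt_diag : ∀ i j, i ≠ j → A i j < A i i := fun i j hij => by
    linarith [hdiag i, (hbd i j hij).2]
  refine ⟨hsymm, fun i j => ?_, fun i j k => ?_, lt_diag, fun i => hdiag i ▸ one_pos⟩
  · rcases eq_or_ne i j with rfl | hij
    · exact hdiag i ▸ zero_le_one
    · exact (hbd i j hij).1
  · rcases eq_or_ne i k with rfl | hik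
    · exact min_le_right _ _
    rcases eq_or_ne k j with rfl | hkj
    · exact min_le_left _ _
    rcases eq_or_ne i j with rfl | hij
    · exact (min_le_left _ _).trans (lt_diag i k hik).le
    rw [← hsymm.apply k j, min_comm]
    exact hultra i j k hij hkj.symm hik

theorem submatrix_sub_const (hA : A.IsStrictlyUltrametric) {s : ℝ}
    (hs_le : ∀ i j, i ≠ j → s ≤ A i j) (hs_lt : ∀ i, s < A i i) {f : κ → ι}
    (hf : Function.Injective f) :
    (A.submatrix f f - of fun _ _ => s).IsStrictlyUltrametric where
  isSymm := IsSymm.ext fun a b => by simp [hA.isSymm.apply (f a) (f b)]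
  nonneg a b := by
    rcases eq_or_ne a b with rfl | hab
    · simpa using (hs_lt (f a)).le
    · simpa using hs_le _ _ (hf.ne hab)
  min_le a b c := by simpa [min_sub_sub_right] using hA.min_le (f a) (f b) (f c)
  lt_diag a b hab := by simpa using hA.lt_diag _ _ (hf.ne hab)
  diag_pos a := by simpa using hs_lt (f a)

theorem apply_eq_of_lt_of_not_lt (hA : A.IsStrictlyUltrametric) {s : ℝ}
    (hs : ∀ i j, i ≠ j → s ≤ A i j) {i a l : ι} (ha : s < A i a) (hl : ¬s < A i l) : A a l = s :=
  le_antisymm (not_lt.1 fun h => hl ((lt_min ha h).trans_le (hA.min_le i l a)))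
    (hs a l (by rintro rfl; exact hl ha))

theorem submatrix_sub_const_mulVec [Fintype ι] [DecidableEq ι] (hA : A.IsStrictlyUltrametric) {s : ℝ}
    (hs : ∀ i j, i ≠ j → s ≤ A i j) {i : ι} {S : Finset ι} (hS : ∀ l, l ∈ S ↔ s < A i l)
    {y : ι → ℝ} {c : ℝ} (hy : A *ᵥ y = fun _ => c) :
    (A.submatrix ((↑) : S → ι) ((↑) : S → ι) - of fun _ _ => s) *ᵥ (fun a : S => y a) =
      fun _ => c - s * ∑ l, y l := by
  funext a
  have ha : s < A i a := (hS a).1 a.2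
  simp only [mulVec, dotProduct, sub_apply, submatrix_apply, of_apply]
  calc ∑ b : S, (A a b - s) * y b
      = ∑ l ∈ S, (A a l - s) * y l := sum_coe_sort S fun l => (A a l - s) * y l
    _ = ∑ l, (A a l - s) * y l := sum_subset (subset_univ S) fun l _ hl => by
        rw [hA.apply_eq_of_lt_of_not_lt hs ha fun h => hl ((hS l).2 h),
          sub_self, zero_mul]
    _ = c - s * ∑ l, y l := by
        simp only [sub_mul, sum_sub_distrib, mul_sum, ← congrFun hy a, mulVec, dotProduct]

theorem sign_eq_of_mulVec_eq_const [Fintype ι] [DecidableEq ι]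
    (hA : A.IsStrictlyUltrametric) {y : ι → ℝ} {c : ℝ}
    (hy : A *ᵥ y = fun _ => c) (i : ι) : sign (y i) = sign c := by
  induction h : Fintype.card ι using Nat.strong_induction_on generalizing ι c with
  | _ n ih =>
  rcases subsingleton_or_nontrivial ι with _ | _
  · have hc : A i i * y i = c := by
      rw [← congrFun hy i, mulVec, dotProduct, Fintype.sum_subsingleton _ i]
    rw [← hc, sign_mul, sign_pos (hA.diag_pos i), one_mul]
  obtain ⟨p, q, hpq, hs⟩ := A.exists_offDiag_min
  have hs_lt (j : ι) : A p q < A j j := by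
    obtain ⟨l, hl⟩ := exists_ne j
    exact (hs j l hl.symm).trans_lt (hA.lt_diag j l hl.symm)
  have hclass (j : ι) : sign (y j) = sign (c - A p q * ∑ l, y l) := by
    let S : Finset ι := {l | A p q < A j l}
    have hS (l : ι) : l ∈ S ↔ A p q < A j l := mem_filter_univ l
    have hpqS : p ∉ S ∨ q ∉ S := by
      by_contra! h
      have hp := (hS p).1 h.1
      have hq := (hS q).1 h.2
      rw [hA.isSymm.apply p j] at hp
      exact (lt_min hp hq).not_ge (hA.min_le p q j)
    have hcard : S.card < n := h ▸ hpqS.elim card_lt_univ_of_notMem card_lt_univ_of_notMem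
    exact ih _ hcard (hA.submatrix_sub_const hs hs_lt Subtype.val_injective)
      (hA.submatrix_sub_const_mulVec hs hS hy) ⟨j, (hS j).2 (hs_lt j)⟩ (Fintype.card_coe S)
  rw [hclass i]
  exact sign_sub_mul_sum_eq_sign (hA.nonneg p q) hclass

end IsStrictlyUltrametric

end Matrix

theorem ultrametric_solution_positive {η : ℝ} (hη : 0 < η) {j : ℕ}
    (A : Matrix (Fin j) (Fin j) ℝ) (hA : MemUltra η A) (s : ℝ)
    (hs_lb : ∀ i l, i ≠ l → s ≤ A i l)
    (hs_attained : ∃ i l, i ≠ l ∧ A i l = s)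
    (y : Fin j → ℝ) (hy : A.mulVec y = fun _ => 1) :
    (∀ i, 0 < y i) ∧ s * ∑ i, y i < 1 := by
  have hA' := Matrix.IsStrictlyUltrametric.of_memUltra hη hA
  have hpos (i : Fin j) : 0 < y i := by
    rw [← sign_eq_one_iff, hA'.sign_eq_of_mulVec_eq_const hy i, sign_pos one_pos]
  obtain ⟨p, q, hpq, rfl⟩ := hs_attained
  refine ⟨hpos, ?_⟩
  simpa [hy] using Matrix.mul_sum_lt_mulVec_apply hpos (hs_lb p) (hA'.lt_diag p q hpq)
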